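/- Let m ≥ 1, a⁺, a⁻ : Fin m → [0,1], and b ∈ (0,1] with b ≤ max_{j} a⁺_j. Define, for each j, x̂_j = min(1, b / a⁺_j) if a⁺_j > 0 and x̂_j = 1 if a⁺_j = 0 (i.e., x̂_j is the product residuum b ←_P a⁺_j). Then x̂ is a solution of the equation ⋁_{j} ((a⁺_j · x_j) ⊔ (a⁻_j · n_P(x_j))) = b, and x̂ is the greatest solution: every solution x satisfies x_j ≤ x̂_j for all j. -/

import Mathlib

open Set

noncomputable def nP (x : ℝ) : ℝ := if x = 0 then 1 else 0

noncomputable def resP (z a : ℝ) : ℝ := if a = 0 then 1 else min 1 (z / a)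

noncomputable def bSup {m : ℕ} (hm : 1 ≤ m) (f : Fin m → ℝ) : ℝ :=
  Finset.univ.sup' ⟨⟨0, hm⟩, Finset.mem_univ _⟩ f

noncomputable def bInf {m : ℕ} (hm : 1 ≤ m) (f : Fin m → ℝ) : ℝ :=
  Finset.univ.inf' ⟨⟨0, hm⟩, Finset.mem_univ _⟩ f

/-!
Since `b > 0`, every `x̂ⱼ = b ←_P a⁺ⱼ` is positive, so `n_P(x̂ⱼ) = 0` and the `a⁻`-terms vanish;
the remaining terms are `a⁺ⱼ · x̂ⱼ = min(a⁺ⱼ, b)`, whose supremum is `min(max a⁺, b) = b`.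
Conversely, a solution `x` satisfies `a⁺ⱼ · xⱼ ≤ b` for every `j`, and residuation gives `xⱼ ≤ x̂ⱼ`.
-/

theorem nP_of_ne_zero {x : ℝ} (hx : x ≠ 0) : nP x = 0 := if_neg hx

theorem resP_le_one (z a : ℝ) : resP z a ≤ 1 := by
  unfold resP
  split_ifs
  exacts [le_rfl, min_le_left _ _]

theorem resP_pos {z a : ℝ} (hz : 0 < z) (ha : 0 ≤ a) : 0 < resP z a := by
  unfold resP
  split_ifs with h
  · exact one_pos
  · exact lt_min one_pos (div_pos hz (ha.lt_of_ne' h))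

theorem mul_resP {z a : ℝ} (hz : 0 ≤ z) (ha : 0 ≤ a) : a * resP z a = min a z := by
  unfold resP
  split_ifs with h
  · simp [h, hz]
  · rw [mul_min_of_nonneg _ _ ha, mul_one, mul_div_cancel₀ _ h]

theorem le_resP_of_mul_le {z a x : ℝ} (ha : 0 ≤ a) (hx : x ≤ 1) (h : a * x ≤ z) :
    x ≤ resP z a := by
  unfold resP
  split_ifs with h0
  · exact hx
  · exact le_min hx ((le_div_iff₀' (ha.lt_of_ne' h0)).mpr h)

theorem mul_resP_sup_mul_nP {z a : ℝ} (c : ℝ) (hz : 0 < z) (ha : 0 ≤ a) :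
    (a * resP z a) ⊔ (c * nP (resP z a)) = min a z := by
  rw [nP_of_ne_zero (resP_pos hz ha).ne', mul_zero, mul_resP hz.le ha]
  exact sup_eq_left.mpr (le_min ha hz.le)

section BoundedSupremum

variable {m : ℕ} (hm : 1 ≤ m)

theorem le_bSup (f : Fin m → ℝ) (j : Fin m) : f j ≤ bSup hm f :=
  Finset.le_sup' f (Finset.mem_univ j)

theorem bSup_min_const (f : Fin m → ℝ) (c : ℝ) :
    bSup hm (fun j => min (f j) c) = min (bSup hm f) c :=
  (Finset.sup'_inf_distrib_right _ f c).symm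

end BoundedSupremum

theorem stmt7_general (m : ℕ) (hm : 1 ≤ m) (ap am : Fin m → ℝ) (b : ℝ)
    (hap : ∀ j, ap j ∈ Icc (0:ℝ) 1)
    (hb : b ∈ Ioc (0:ℝ) 1) (hmax : b ≤ bSup hm ap) :
    ((∀ j, resP b (ap j) ∈ Icc (0:ℝ) 1) ∧
      bSup hm (fun j => (ap j * resP b (ap j)) ⊔ (am j * nP (resP b (ap j)))) = b) ∧
    (∀ x : Fin m → ℝ, (∀ j, x j ∈ Icc (0:ℝ) 1) →
      bSup hm (fun j => (ap j * x j) ⊔ (am j * nP (x j))) = b →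
      ∀ j, x j ≤ resP b (ap j)) := by
  have hb0 : 0 < b := hb.1
  refine ⟨⟨fun j => ⟨(resP_pos hb0 (hap j).1).le, resP_le_one _ _⟩, ?_⟩, ?_⟩
  · simp_rw [mul_resP_sup_mul_nP _ hb0 (hap _).1]
    rw [bSup_min_const, min_eq_right hmax]
  · intro x hx hsol j
    have hterm : ap j * x j ≤ b := le_sup_left.trans (hsol ▸ le_bSup hm _ j)
    exact le_resP_of_mul_le (hap j).1 (hx j).2 hterm

theorem stmt7 (m : ℕ) (hm : 1 ≤ m) (ap am : Fin m → ℝ) (b : ℝ)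
    (hap : ∀ j, ap j ∈ Icc (0:ℝ) 1) (ham : ∀ j, am j ∈ Icc (0:ℝ) 1)
    (hb : b ∈ Ioc (0:ℝ) 1) (hmax : b ≤ bSup hm ap) :
    ((∀ j, resP b (ap j) ∈ Icc (0:ℝ) 1) ∧
      bSup hm (fun j => (ap j * resP b (ap j)) ⊔ (am j * nP (resP b (ap j)))) = b) ∧
    (∀ x : Fin m → ℝ, (∀ j, x j ∈ Icc (0:ℝ) 1) →
      bSup hm (fun j => (ap j * x j) ⊔ (am j * nP (x j))) = b →
      ∀ j, x j ≤ resP b (ap j)) :=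
  stmt7_general m hm ap am b hap hb hmax
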